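/- Let ψ : ℝ³ → ℝ be a twice continuously differentiable function with compact support and let ω : ℝ³ → ℝ³ be a smooth divergence-free vector field. Then the identity ∫_{ℝ³} ψ |rot ω|² dx = ∫_{ℝ³} ψ (rot rot ω)·ω dx − ∫_{ℝ³} ∇²ψ : (ω ⊗ ω) dx + (1/2) ∫_{ℝ³} (Δψ) |ω|² dx holds, where ∇²ψ : (ω ⊗ ω) = Σ_{i,j} (∂ᵢ∂ⱼψ) ωᵢ ωⱼ. -/

import Mathlib

open MeasureTheory Real

noncomputable section

abbrev E3 := EuclideanSpace ℝ (Fin 3)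

/-- partial derivative ∂ᵢ of a scalar function on ℝ³ -/
def pd (i : Fin 3) (f : E3 → ℝ) (x : E3) : ℝ :=
  fderiv ℝ f x (EuclideanSpace.single i 1)

/-- Laplacian of a scalar function -/
def lap (f : E3 → ℝ) (x : E3) : ℝ := ∑ i, pd i (pd i f) x

/-- divergence of a vector field -/
def vdiv (u : E3 → E3) (x : E3) : ℝ := ∑ i, pd i (fun y => u y i) x

/-- curl (rot) of a vector field on ℝ³ -/
def curl (ω : E3 → E3) (x : E3) : E3 :=
  (WithLp.equiv 2 (Fin 3 → ℝ)).symm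
    ![pd 1 (fun y => ω y 2) x - pd 2 (fun y => ω y 1) x,
      pd 2 (fun y => ω y 0) x - pd 0 (fun y => ω y 2) x,
      pd 0 (fun y => ω y 1) x - pd 1 (fun y => ω y 0) x]

/-- mean value of a vector field over a set -/
def avgOn (f : E3 → E3) (B : Set E3) : E3 :=
  (volume B).toReal⁻¹ • ∫ x in B, f x

/-- squared norm of the full gradient of a vector field: |∇u|² = Σᵢⱼ (∂ⱼuᵢ)² -/
def gradSq (u : E3 → E3) (x : E3) : ℝ :=
  ∑ i, ∑ j, (pd j (fun y => u y i) x) ^ 2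

/-- u, p is a smooth solution of the stationary Navier–Stokes system on ℝ³ -/
def NavierStokes (u : E3 → E3) (p : E3 → ℝ) : Prop :=
  ContDiff ℝ (⊤ : ℕ∞) u ∧ ContDiff ℝ (⊤ : ℕ∞) p ∧
  (∀ x, ∀ i : Fin 3,
    (∑ j, u x j * pd j (fun y => u y i) x) - lap (fun y => u y i) x = - pd i p x) ∧
  (∀ x, vdiv u x = 0)

/-- ω is of bounded mean oscillation on ℝ³ -/
def IsBMO (ω : E3 → E3) : Prop :=
  ∃ M : ℝ, ∀ (c : E3) (r : ℝ), 0 < r →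
    (volume (Metric.ball c r)).toReal⁻¹ *
      ∫ x in Metric.ball c r, ‖ω x - avgOn ω (Metric.ball c r)‖ ≤ M



-- basic lemmas
lemma pd_contDiff {n m : WithTop ℕ∞} {f : E3 → ℝ} (hf : ContDiff ℝ n f) (h : m + 1 ≤ n) (i : Fin 3) :
    ContDiff ℝ m (pd i f) :=
  ((hf.fderiv_right h).clm_apply contDiff_const)

lemma pd_contDiff_top {f : E3 → ℝ} (hf : ContDiff ℝ (⊤ : ℕ∞) f) (i : Fin 3) :
    ContDiff ℝ (⊤ : ℕ∞) (pd i f) :=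
  pd_contDiff hf (by simp) i

lemma pd_continuous {f : E3 → ℝ} (hf : ContDiff ℝ 1 f) (i : Fin 3) :
    Continuous (pd i f) :=
  (pd_contDiff (m := 0) hf (by norm_num) i).continuous

lemma pd_hasCompactSupport {f : E3 → ℝ} (hf : HasCompactSupport f) (i : Fin 3) :
    HasCompactSupport (pd i f) := by
  have h := hf.fderiv (𝕜 := ℝ)
  exact h.comp_left (g := fun L : E3 →L[ℝ] ℝ => L (EuclideanSpace.single i 1)) rfl

lemma pd_mul {f g : E3 → ℝ} {x : E3} (hf : DifferentiableAt ℝ f x)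
    (hg : DifferentiableAt ℝ g x) (i : Fin 3) :
    pd i (fun y => f y * g y) x = pd i f x * g x + f x * pd i g x := by
  simp only [pd]
  rw [fderiv_fun_mul hf hg]
  simp only [ContinuousLinearMap.add_apply, ContinuousLinearMap.smul_apply, smul_eq_mul]
  ring

lemma pd_add {f g : E3 → ℝ} {x : E3} (hf : DifferentiableAt ℝ f x)
    (hg : DifferentiableAt ℝ g x) (i : Fin 3) :
    pd i (fun y => f y + g y) x = pd i f x + pd i g x := by
  simp only [pd]; rw [fderiv_fun_add hf hg]; simp

lemma pd_sub {f g : E3 → ℝ} {x : E3} (hf : DifferentiableAt ℝ f x)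
    (hg : DifferentiableAt ℝ g x) (i : Fin 3) :
    pd i (fun y => f y - g y) x = pd i f x - pd i g x := by
  simp only [pd]; rw [fderiv_fun_sub hf hg]; simp

lemma pd_comm {f : E3 → ℝ} (hf : ContDiff ℝ 2 f) (i j : Fin 3) (x : E3) :
    pd i (pd j f) x = pd j (pd i f) x := by
  have hd : Differentiable ℝ f := (hf.of_le one_le_two).differentiable one_ne_zero
  have hfd : ∀ y, HasFDerivAt f (fderiv ℝ f y) y := fun y => (hd y).hasFDerivAt
  have h2 : DifferentiableAt ℝ (fderiv ℝ f) x := by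
    have := (hf.fderiv_right (m := 1) le_rfl).differentiable one_ne_zero
    exact this x
  have hsymm := second_derivative_symmetric hfd h2.hasFDerivAt
  have key : ∀ (i j : Fin 3), pd i (pd j f) x
      = fderiv ℝ (fderiv ℝ f) x (EuclideanSpace.single i 1) (EuclideanSpace.single j 1) := by
    intro i j
    simp only [pd]
    have hrw : pd j f = fun y => fderiv ℝ f y (EuclideanSpace.single j 1) := rfl
    rw [hrw, fderiv_clm_apply h2 (differentiableAt_const _)]
    simp
  rw [key i j, key j i, hsymm]

lemma cont_integrable {f : E3 → ℝ} (hf : Continuous f) (hs : HasCompactSupport f) :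
    Integrable f (volume : Measure E3) :=
  hf.integrable_of_hasCompactSupport hs

/-- integral of a partial derivative of a C¹ compactly supported function vanishes -/
lemma integral_pd_eq_zero {F : E3 → ℝ} (hF : ContDiff ℝ 1 F)
    (hs : HasCompactSupport F) (i : Fin 3) :
    ∫ x, pd i F x = 0 := by
  have hd : Differentiable ℝ F := hF.differentiable one_ne_zero
  have h := integral_mul_fderiv_eq_neg_fderiv_mul_of_integrable
    (μ := (volume : Measure E3)) (f := F) (g := fun _ => (1:ℝ))
    (v := EuclideanSpace.single i 1) ?_ ?_ ?_ (fun x _ => hd x) (fun x _ => differentiableAt_const _)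
  · simpa [pd] using h.symm
  · simpa using (show Integrable (fun x => fderiv ℝ F x (EuclideanSpace.single i 1)) (volume : Measure E3) from
      cont_integrable (pd_continuous hF i) (pd_hasCompactSupport hs i))
  · simp [fderiv_const]
  · simpa using cont_integrable hF.continuous hs

/-- Integration-by-parts identity:
`∫ ψ|rot ω|² = ∫ ψ (rot rot ω)·ω − ∫ ∇²ψ : ω⊗ω + (1/2)∫ (Δψ)|ω|²`
for compactly supported `ψ ∈ C²` and smooth divergence-free `ω`. -/
theorem curl_sq_identity
    (ψ : E3 → ℝ) (ω : E3 → E3)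
    (hψ : ContDiff ℝ 2 ψ) (hψc : HasCompactSupport ψ)
    (hω_smooth : ContDiff ℝ (⊤ : ℕ∞) ω) (hω_div : ∀ x, vdiv ω x = 0) :
    (∫ x, ψ x * ‖curl ω x‖ ^ 2) =
      (∫ x, ψ x * ∑ i, curl (curl ω) x i * ω x i) -
      (∫ x, ∑ i, ∑ j, pd i (pd j ψ) x * ω x i * ω x j) +
      (1 / 2) * ∫ x, lap ψ x * ‖ω x‖ ^ 2 := by
  classical
  -- smoothness of components
  have hwC : ∀ i : Fin 3, ContDiff ℝ (⊤ : ℕ∞) (fun y => ω y i) := fun i =>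
    (EuclideanSpace.proj (𝕜 := ℝ) i).contDiff.comp hω_smooth
  have hwD : ∀ i, Differentiable ℝ (fun y => ω y i) := fun i => (hwC i).differentiable (by simp)
  have hwcont : ∀ i, Continuous (fun y => ω y i) := fun i => (hwC i).continuous
  have hpdwC : ∀ (i j : Fin 3), ContDiff ℝ (⊤ : ℕ∞) (pd j (fun y => ω y i)) := fun i j =>
    pd_contDiff_top (hwC i) j
  have hpdwD : ∀ i j, Differentiable ℝ (pd j (fun y => ω y i)) := fun i j =>
    (hpdwC i j).differentiable (by simp)
  have hpdwcont : ∀ i j, Continuous (pd j (fun y => ω y i)) := fun i j => (hpdwC i j).continuous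
  have hpd2wC : ∀ i j k, ContDiff ℝ (⊤ : ℕ∞) (pd k (pd j (fun y => ω y i))) := fun i j k =>
    pd_contDiff_top (hpdwC i j) k
  have hpd2wcont : ∀ i j k, Continuous (pd k (pd j (fun y => ω y i))) := fun i j k =>
    (hpd2wC i j k).continuous
  have hψ1 : ContDiff ℝ 1 ψ := hψ.of_le one_le_two
  have hψD : Differentiable ℝ ψ := hψ1.differentiable one_ne_zero
  have hpdψ1 : ∀ j, ContDiff ℝ 1 (pd j ψ) := fun j => pd_contDiff hψ (by norm_num) j
  have hpdψD : ∀ j, Differentiable ℝ (pd j ψ) := fun j => (hpdψ1 j).differentiable one_ne_zero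
  have hpdψc : ∀ j, HasCompactSupport (pd j ψ) := fun j => pd_hasCompactSupport hψc j
  have hpd2ψcont : ∀ i j, Continuous (pd i (pd j ψ)) := fun i j => pd_continuous (hpdψ1 j) i
  have hpd2ψc : ∀ i j, HasCompactSupport (pd i (pd j ψ)) := fun i j =>
    pd_hasCompactSupport (hpdψc j) i
  -- curl components
  have hcg0 : ∀ (v : E3 → E3) x, curl v x 0
      = pd 1 (fun y => v y 2) x - pd 2 (fun y => v y 1) x := by intro v x; simp [curl]
  have hcg1 : ∀ (v : E3 → E3) x, curl v x 1
      = pd 2 (fun y => v y 0) x - pd 0 (fun y => v y 2) x := by intro v x; simp [curl]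
  have hcg2 : ∀ (v : E3 → E3) x, curl v x 2
      = pd 0 (fun y => v y 1) x - pd 1 (fun y => v y 0) x := by intro v x; simp [curl]
  have hcf0 : (fun y => curl ω y 0)
      = fun y => pd 1 (fun z => ω z 2) y - pd 2 (fun z => ω z 1) y := funext (hcg0 ω)
  have hcf1 : (fun y => curl ω y 1)
      = fun y => pd 2 (fun z => ω z 0) y - pd 0 (fun z => ω z 2) y := funext (hcg1 ω)
  have hcf2 : (fun y => curl ω y 2)
      = fun y => pd 0 (fun z => ω z 1) y - pd 1 (fun z => ω z 0) y := funext (hcg2 ω)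
  -- curl curl components
  have hcc0 : ∀ x, curl (curl ω) x 0 =
      (pd 1 (pd 0 (fun z => ω z 1)) x - pd 1 (pd 1 (fun z => ω z 0)) x)
      - (pd 2 (pd 2 (fun z => ω z 0)) x - pd 2 (pd 0 (fun z => ω z 2)) x) := by
    intro x
    rw [hcg0 (curl ω) x, hcf2, hcf1,
      pd_sub ((hpdwD 1 0) x) ((hpdwD 0 1) x) 1, pd_sub ((hpdwD 0 2) x) ((hpdwD 2 0) x) 2]
  have hcc1 : ∀ x, curl (curl ω) x 1 =
      (pd 2 (pd 1 (fun z => ω z 2)) x - pd 2 (pd 2 (fun z => ω z 1)) x)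
      - (pd 0 (pd 0 (fun z => ω z 1)) x - pd 0 (pd 1 (fun z => ω z 0)) x) := by
    intro x
    rw [hcg1 (curl ω) x, hcf0, hcf2,
      pd_sub ((hpdwD 2 1) x) ((hpdwD 1 2) x) 2, pd_sub ((hpdwD 1 0) x) ((hpdwD 0 1) x) 0]
  have hcc2 : ∀ x, curl (curl ω) x 2 =
      (pd 0 (pd 2 (fun z => ω z 0)) x - pd 0 (pd 0 (fun z => ω z 2)) x)
      - (pd 1 (pd 1 (fun z => ω z 2)) x - pd 1 (pd 2 (fun z => ω z 1)) x) := by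
    intro x
    rw [hcg2 (curl ω) x, hcf1, hcf0,
      pd_sub ((hpdwD 2 1) x) ((hpdwD 1 2) x) 1]
    rw [pd_sub ((hpdwD 0 2) x) ((hpdwD 2 0) x) 0]
  -- norm squared
  have hnorm : ∀ v : E3, ‖v‖ ^ 2 = ∑ i, (v i) ^ 2 := by
    intro v
    rw [EuclideanSpace.norm_eq, Real.sq_sqrt (Finset.sum_nonneg fun i _ => sq_nonneg _)]
    exact Finset.sum_congr rfl fun i _ => by rw [Real.norm_eq_abs, sq_abs]
  -- divergence relations
  have hdiv1 : ∀ x, pd 0 (fun y => ω y 0) x + pd 1 (fun y => ω y 1) x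
      + pd 2 (fun y => ω y 2) x = 0 := by
    intro x; have := hω_div x
    simpa [vdiv, Fin.sum_univ_three] using this
  have hdiv2 : ∀ (k : Fin 3) x, pd k (pd 0 (fun y => ω y 0)) x
      + pd k (pd 1 (fun y => ω y 1)) x + pd k (pd 2 (fun y => ω y 2)) x = 0 := by
    intro k x
    have e : (fun x => pd 0 (fun y => ω y 0) x + pd 1 (fun y => ω y 1) x
        + pd 2 (fun y => ω y 2) x) = fun _ : E3 => (0:ℝ) := funext hdiv1
    have z : pd k (fun _ : E3 => (0:ℝ)) x = 0 := by simp [pd]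
    rw [← e] at z
    rw [pd_add (((hpdwD 0 0) x).fun_add ((hpdwD 1 1) x)) ((hpdwD 2 2) x) k,
      pd_add ((hpdwD 0 0) x) ((hpdwD 1 1) x) k] at z
    linarith [z]
  -- Schwarz symmetry
  have swψ : ∀ (i j : Fin 3) x, pd i (pd j ψ) x = pd j (pd i ψ) x := pd_comm hψ
  have swW : ∀ (c i j : Fin 3) x, pd i (pd j (fun y => ω y c)) x
      = pd j (pd i (fun y => ω y c)) x := fun c => pd_comm ((hwC c).of_le (WithTop.coe_le_coe.mpr le_top))
  -- substitution rules from divergence-freeness (normalized)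
  have s1 : ∀ x, pd 2 (fun y => ω y 2) x
      = - pd 0 (fun y => ω y 0) x - pd 1 (fun y => ω y 1) x := by
    intro x; have := hdiv1 x; linarith
  have t0 : ∀ x, pd 0 (pd 2 (fun y => ω y 2)) x
      = - pd 0 (pd 0 (fun y => ω y 0)) x - pd 0 (pd 1 (fun y => ω y 1)) x := by
    intro x; have := hdiv2 0 x; linarith
  have t1 : ∀ x, pd 1 (pd 2 (fun y => ω y 2)) x
      = - pd 0 (pd 1 (fun y => ω y 0)) x - pd 1 (pd 1 (fun y => ω y 1)) x := by
    intro x; have := hdiv2 1 x; rw [swW 0 1 0 x] at this; linarith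
  have t2 : ∀ x, pd 2 (pd 2 (fun y => ω y 2)) x
      = - pd 0 (pd 2 (fun y => ω y 0)) x - pd 1 (pd 2 (fun y => ω y 1)) x := by
    intro x; have := hdiv2 2 x
    rw [swW 0 2 0 x, swW 1 2 1 x] at this; linarith
  -- pointwise product-rule expansions
  have X1 : ∀ (i j : Fin 3) x, pd j (fun y => ψ y * (ω y i * pd j (fun z => ω z i) y)) x
      = pd j ψ x * (ω x i * pd j (fun z => ω z i) x)
        + ψ x * (pd j (fun z => ω z i) x * pd j (fun z => ω z i) x
          + ω x i * pd j (pd j (fun z => ω z i)) x) := by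
    intro i j x
    rw [pd_mul (hψD x) (((hwD i) x).fun_mul ((hpdwD i j) x)) j,
      pd_mul ((hwD i) x) ((hpdwD i j) x) j]
  have X2 : ∀ (i j : Fin 3) x, pd j (fun y => pd j ψ y * (ω y i * ω y i)) x
      = pd j (pd j ψ) x * (ω x i * ω x i)
        + pd j ψ x * (pd j (fun z => ω z i) x * ω x i + ω x i * pd j (fun z => ω z i) x) := by
    intro i j x
    rw [pd_mul ((hpdψD j) x) (((hwD i) x).fun_mul ((hwD i) x)) j,
      pd_mul ((hwD i) x) ((hwD i) x) j]
  have X3 : ∀ (i j : Fin 3) x, pd i (fun y => pd j ψ y * (ω y i * ω y j)) x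
      = pd i (pd j ψ) x * (ω x i * ω x j)
        + pd j ψ x * (pd i (fun z => ω z i) x * ω x j + ω x i * pd i (fun z => ω z j) x) := by
    intro i j x
    rw [pd_mul ((hpdψD j) x) (((hwD i) x).fun_mul ((hwD j) x)) i,
      pd_mul ((hwD i) x) ((hwD j) x) i]
  have X4 : ∀ (i j : Fin 3) x, pd j (fun y => ψ y * (ω y i * pd i (fun z => ω z j) y)) x
      = pd j ψ x * (ω x i * pd i (fun z => ω z j) x)
        + ψ x * (pd j (fun z => ω z i) x * pd i (fun z => ω z j) x
          + ω x i * pd j (pd i (fun z => ω z j)) x) := by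
    intro i j x
    rw [pd_mul (hψD x) (((hwD i) x).fun_mul ((hpdwD j i) x)) j,
      pd_mul ((hwD i) x) ((hpdwD j i) x) j]
  -- pointwise grand identity
  have hpt : ∀ x : E3,
      (ψ x * ∑ i, curl (curl ω) x i * ω x i)
      - (∑ i, ∑ j, pd i (pd j ψ) x * ω x i * ω x j)
      + (1 / 2) * (lap ψ x * ‖ω x‖ ^ 2)
      - ψ x * ‖curl ω x‖ ^ 2
      = ∑ i, ∑ j,
        (- pd j (fun y => ψ y * (ω y i * pd j (fun z => ω z i) y)) x
         + (1/2) * pd j (fun y => pd j ψ y * (ω y i * ω y i)) x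
         - pd i (fun y => pd j ψ y * (ω y i * ω y j)) x
         + pd j (fun y => ψ y * (ω y i * pd i (fun z => ω z j) y)) x) := by
    intro x
    simp only [lap, hnorm]
    simp only [Fin.sum_univ_three]
    simp only [hcg0 ω, hcg1 ω, hcg2 ω, hcc0, hcc1, hcc2]
    simp only [X1, X2, X3, X4]
    simp only [swψ 1 0, swψ 2 0, swψ 2 1,
      swW 0 1 0, swW 0 2 0, swW 0 2 1, swW 1 1 0, swW 1 2 0, swW 1 2 1,
      swW 2 1 0, swW 2 2 0, swW 2 2 1]
    simp only [s1, t0, t1, t2]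
    ring
  -- smoothness and support of the exact-derivative integrands
  have C1 : ∀ i j : Fin 3, ContDiff ℝ 1 (fun y => ψ y * (ω y i * pd j (fun z => ω z i) y)) :=
    fun i j => hψ1.mul (((hwC i).of_le (by simp)).mul ((hpdwC i j).of_le (by simp)))
  have S1 : ∀ i j : Fin 3, HasCompactSupport (fun y => ψ y * (ω y i * pd j (fun z => ω z i) y)) :=
    fun i j => hψc.mul_right
  have C2 : ∀ i j : Fin 3, ContDiff ℝ 1 (fun y => pd j ψ y * (ω y i * ω y i)) :=
    fun i j => (hpdψ1 j).mul (((hwC i).of_le (by simp)).mul ((hwC i).of_le (by simp)))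
  have S2 : ∀ i j : Fin 3, HasCompactSupport (fun y => pd j ψ y * (ω y i * ω y i)) :=
    fun i j => (hpdψc j).mul_right
  have C3 : ∀ i j : Fin 3, ContDiff ℝ 1 (fun y => pd j ψ y * (ω y i * ω y j)) :=
    fun i j => (hpdψ1 j).mul (((hwC i).of_le (by simp)).mul ((hwC j).of_le (by simp)))
  have S3 : ∀ i j : Fin 3, HasCompactSupport (fun y => pd j ψ y * (ω y i * ω y j)) :=
    fun i j => (hpdψc j).mul_right
  have C4 : ∀ i j : Fin 3, ContDiff ℝ 1 (fun y => ψ y * (ω y i * pd i (fun z => ω z j) y)) :=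
    fun i j => hψ1.mul (((hwC i).of_le (by simp)).mul ((hpdwC j i).of_le (by simp)))
  have S4 : ∀ i j : Fin 3, HasCompactSupport (fun y => ψ y * (ω y i * pd i (fun z => ω z j) y)) :=
    fun i j => hψc.mul_right
  have Igen : ∀ (F : E3 → ℝ) (k : Fin 3), ContDiff ℝ 1 F → HasCompactSupport F →
      Integrable (fun x => pd k F x) := fun F k h1 h2 =>
    cont_integrable (pd_continuous h1 k) (pd_hasCompactSupport h2 k)
  have Icombo : ∀ i j : Fin 3, Integrable (fun x =>
      - pd j (fun y => ψ y * (ω y i * pd j (fun z => ω z i) y)) x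
      + (1/2) * pd j (fun y => pd j ψ y * (ω y i * ω y i)) x
      - pd i (fun y => pd j ψ y * (ω y i * ω y j)) x
      + pd j (fun y => ψ y * (ω y i * pd i (fun z => ω z j) y)) x) := by
    intro i j
    exact (((Igen _ j (C1 i j) (S1 i j)).neg.add
      ((Igen _ j (C2 i j) (S2 i j)).const_mul (1/2))).sub
      (Igen _ i (C3 i j) (S3 i j))).add (Igen _ j (C4 i j) (S4 i j))
  have hcombo : ∀ i j : Fin 3, (∫ x,
      (- pd j (fun y => ψ y * (ω y i * pd j (fun z => ω z i) y)) x
      + (1/2) * pd j (fun y => pd j ψ y * (ω y i * ω y i)) x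
      - pd i (fun y => pd j ψ y * (ω y i * ω y j)) x
      + pd j (fun y => ψ y * (ω y i * pd i (fun z => ω z j) y)) x)) = 0 := by
    intro i j
    have i1 : Integrable (fun x => pd j (fun y => ψ y * (ω y i * pd j (fun z => ω z i) y)) x) :=
      Igen _ j (C1 i j) (S1 i j)
    have i2 : Integrable (fun x => pd j (fun y => pd j ψ y * (ω y i * ω y i)) x) :=
      Igen _ j (C2 i j) (S2 i j)
    have i3 : Integrable (fun x => pd i (fun y => pd j ψ y * (ω y i * ω y j)) x) :=
      Igen _ i (C3 i j) (S3 i j)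
    have i4 : Integrable (fun x => pd j (fun y => ψ y * (ω y i * pd i (fun z => ω z j) y)) x) :=
      Igen _ j (C4 i j) (S4 i j)
    have i1n : Integrable (fun x =>
        - pd j (fun y => ψ y * (ω y i * pd j (fun z => ω z i) y)) x) := i1.neg
    have i2c : Integrable (fun x =>
        (1/2) * pd j (fun y => pd j ψ y * (ω y i * ω y i)) x) := i2.const_mul _
    have i12 : Integrable (fun x =>
        - pd j (fun y => ψ y * (ω y i * pd j (fun z => ω z i) y)) x
        + (1/2) * pd j (fun y => pd j ψ y * (ω y i * ω y i)) x) := i1n.add i2c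
    have i123 : Integrable (fun x =>
        - pd j (fun y => ψ y * (ω y i * pd j (fun z => ω z i) y)) x
        + (1/2) * pd j (fun y => pd j ψ y * (ω y i * ω y i)) x
        - pd i (fun y => pd j ψ y * (ω y i * ω y j)) x) := i12.sub i3
    rw [integral_add i123 i4, integral_sub i12 i3, integral_add i1n i2c,
      integral_neg, integral_const_mul _ _,
      integral_pd_eq_zero (C1 i j) (S1 i j) j,
      integral_pd_eq_zero (C2 i j) (S2 i j) j,
      integral_pd_eq_zero (C3 i j) (S3 i j) i,
      integral_pd_eq_zero (C4 i j) (S4 i j) j]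
    ring
  -- the key vanishing integral
  have hkey : (∫ x, ((ψ x * ∑ i, curl (curl ω) x i * ω x i)
      - (∑ i, ∑ j, pd i (pd j ψ) x * ω x i * ω x j)
      + (1 / 2) * (lap ψ x * ‖ω x‖ ^ 2)
      - ψ x * ‖curl ω x‖ ^ 2)) = 0 := by
    simp only [hpt]
    rw [integral_finset_sum _ (fun i _ => integrable_finset_sum _ (fun j _ => Icombo i j))]
    refine Finset.sum_eq_zero fun i _ => ?_
    rw [integral_finset_sum _ (fun j _ => Icombo i j)]
    exact Finset.sum_eq_zero fun j _ => hcombo i j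
  -- integrability of the four main integrands
  have hnormωcont : Continuous (fun x => ‖ω x‖ ^ 2) := by
    have e : (fun x => ‖ω x‖ ^ 2)
        = fun x => (ω x 0) ^ 2 + (ω x 1) ^ 2 + (ω x 2) ^ 2 := by
      funext x; rw [hnorm]; simp [Fin.sum_univ_three]
    rw [e]
    exact (((hwcont 0).pow 2).add ((hwcont 1).pow 2)).add ((hwcont 2).pow 2)
  have iP : Integrable (fun x => ψ x * ‖curl ω x‖ ^ 2) := by
    refine cont_integrable (hψ1.continuous.mul ?_) hψc.mul_right
    have e : (fun x => ‖curl ω x‖ ^ 2) = fun x =>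
        (pd 1 (fun z => ω z 2) x - pd 2 (fun z => ω z 1) x) ^ 2
        + (pd 2 (fun z => ω z 0) x - pd 0 (fun z => ω z 2) x) ^ 2
        + (pd 0 (fun z => ω z 1) x - pd 1 (fun z => ω z 0) x) ^ 2 := by
      funext x; rw [hnorm]; simp only [Fin.sum_univ_three, hcg0 ω, hcg1 ω, hcg2 ω]
    rw [e]
    exact ((((hpdwcont 2 1).sub (hpdwcont 1 2)).pow 2).add
      (((hpdwcont 0 2).sub (hpdwcont 2 0)).pow 2)).add
      (((hpdwcont 1 0).sub (hpdwcont 0 1)).pow 2)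
  have iQ : Integrable (fun x => ψ x * ∑ i, curl (curl ω) x i * ω x i) := by
    refine cont_integrable (hψ1.continuous.mul ?_) hψc.mul_right
    have e : (fun x => ∑ i, curl (curl ω) x i * ω x i) = fun x =>
        ((pd 1 (pd 0 (fun z => ω z 1)) x - pd 1 (pd 1 (fun z => ω z 0)) x)
          - (pd 2 (pd 2 (fun z => ω z 0)) x - pd 2 (pd 0 (fun z => ω z 2)) x)) * ω x 0
        + ((pd 2 (pd 1 (fun z => ω z 2)) x - pd 2 (pd 2 (fun z => ω z 1)) x)
          - (pd 0 (pd 0 (fun z => ω z 1)) x - pd 0 (pd 1 (fun z => ω z 0)) x)) * ω x 1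
        + ((pd 0 (pd 2 (fun z => ω z 0)) x - pd 0 (pd 0 (fun z => ω z 2)) x)
          - (pd 1 (pd 1 (fun z => ω z 2)) x - pd 1 (pd 2 (fun z => ω z 1)) x)) * ω x 2 := by
      funext x; simp only [Fin.sum_univ_three, hcc0, hcc1, hcc2]
    rw [e]
    exact (((((hpd2wcont 1 0 1).sub (hpd2wcont 0 1 1)).sub
        ((hpd2wcont 0 2 2).sub (hpd2wcont 2 0 2))).mul (hwcont 0)).add
      (((((hpd2wcont 2 1 2).sub (hpd2wcont 1 2 2)).sub
        ((hpd2wcont 1 0 0).sub (hpd2wcont 0 1 0))).mul (hwcont 1)))).add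
      (((((hpd2wcont 0 2 0).sub (hpd2wcont 2 0 0)).sub
        ((hpd2wcont 2 1 1).sub (hpd2wcont 1 2 1))).mul (hwcont 2)))
  have iR : Integrable (fun x => ∑ i, ∑ j, pd i (pd j ψ) x * ω x i * ω x j) := by
    refine integrable_finset_sum _ (fun i _ => integrable_finset_sum _ (fun j _ => ?_))
    exact cont_integrable (((hpd2ψcont i j).mul (hwcont i)).mul (hwcont j))
      ((hpd2ψc i j).mul_right.mul_right)
  have hlapcont : Continuous (lap ψ) := by
    have e : lap ψ = fun x => pd 0 (pd 0 ψ) x + pd 1 (pd 1 ψ) x + pd 2 (pd 2 ψ) x := by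
      funext x; simp [lap, Fin.sum_univ_three]
    rw [e]
    exact ((hpd2ψcont 0 0).add (hpd2ψcont 1 1)).add (hpd2ψcont 2 2)
  have hlapc : HasCompactSupport (lap ψ) := by
    have e : lap ψ = fun x => pd 0 (pd 0 ψ) x + pd 1 (pd 1 ψ) x + pd 2 (pd 2 ψ) x := by
      funext x; simp [lap, Fin.sum_univ_three]
    rw [e]
    exact ((hpd2ψc 0 0).add (hpd2ψc 1 1)).add (hpd2ψc 2 2)
  have iS : Integrable (fun x => lap ψ x * ‖ω x‖ ^ 2) :=
    cont_integrable (hlapcont.mul hnormωcont) hlapc.mul_right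
  -- splitting the key integral
  have hsplit : (∫ x, ((ψ x * ∑ i, curl (curl ω) x i * ω x i)
      - (∑ i, ∑ j, pd i (pd j ψ) x * ω x i * ω x j)
      + (1 / 2) * (lap ψ x * ‖ω x‖ ^ 2)
      - ψ x * ‖curl ω x‖ ^ 2))
      = (∫ x, ψ x * ∑ i, curl (curl ω) x i * ω x i)
        - (∫ x, ∑ i, ∑ j, pd i (pd j ψ) x * ω x i * ω x j)
        + (1 / 2) * (∫ x, lap ψ x * ‖ω x‖ ^ 2)
        - ∫ x, ψ x * ‖curl ω x‖ ^ 2 := by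
    have iQR : Integrable (fun x => (ψ x * ∑ i, curl (curl ω) x i * ω x i)
        - (∑ i, ∑ j, pd i (pd j ψ) x * ω x i * ω x j)) := iQ.sub iR
    have iSc : Integrable (fun x => (1 / 2) * (lap ψ x * ‖ω x‖ ^ 2)) := iS.const_mul _
    have iQRS : Integrable (fun x => (ψ x * ∑ i, curl (curl ω) x i * ω x i)
        - (∑ i, ∑ j, pd i (pd j ψ) x * ω x i * ω x j)
        + (1 / 2) * (lap ψ x * ‖ω x‖ ^ 2)) := iQR.add iSc
    rw [integral_sub iQRS iP, integral_add iQR iSc, integral_sub iQ iR, integral_const_mul _ _]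
  rw [hsplit] at hkey
  linarith [hkey]
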